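/- With real coefficients the parametrised simplicial volume recovers the ordinary simplicial volume: for every oriented closed connected manifold M with fundamental group Γ and every standard Γ-space (X,μ), the infimum of Σ ∫_X |f_j| dμ over all cycles in L^∞(X,μ;R) ⊗_{ZΓ} C_n(M̃;Z) representing the image of [M]_Z equals ‖M‖. -/

import Mathlib

open scoped BigOperators
open Finsupp

noncomputable section

namespace SimplexCategory

/-- The topological simplex associated to `x : SimplexCategory`
(the definition of the older Mathlib). -/
def toTopObj (x : SimplexCategory) : Set (Fin (x.len + 1) → NNReal) :=
  {f | ∑ i, f i = 1}

instance (x : SimplexCategory) : CoeFun x.toTopObj fun _ => Fin (x.len + 1) → NNReal :=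
  ⟨fun f => (f : Fin (x.len + 1) → NNReal)⟩

/-- A morphism in `SimplexCategory` induces a map on the associated topological spaces. -/
def toTopMap {x y : SimplexCategory} (f : x ⟶ y) (g : x.toTopObj) : y.toTopObj :=
  ⟨fun i => ∑ j ∈ Finset.univ.filter (f.toOrderHom · = i), g j, by
    simp only [toTopObj, Set.mem_ofPred_eq]
    rw [← Finset.sum_biUnion]
    · have hg : ∑ i : Fin (x.len + 1), g i = 1 := g.2
      convert hg
      simp [Finset.eq_univ_iff_forall]
    · apply Set.pairwiseDisjoint_filter⟩

theorem continuous_toTopMap {x y : SimplexCategory} (f : x ⟶ y) :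
    Continuous (toTopMap f) := by
  refine Continuous.subtype_mk (continuous_pi fun i => ?_) _
  exact continuous_finsetSum _ (fun j _ => (continuous_apply _).comp continuous_subtype_val)

end SimplexCategory

/-- The topological standard `n`-simplex. -/
abbrev TSimplex (n : ℕ) : Type :=
  (SimplexCategory.toTopObj (SimplexCategory.mk n))

/-- Singular `n`-simplices of a space `X`. -/
abbrev SSimplex (n : ℕ) (X : Type) [TopologicalSpace X] : Type := C(TSimplex n, X)

/-- Singular `n`-chains of `X` with coefficients in an abelian group `A`,
with its `ℓ¹`-flavoured finitely supported model. -/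
abbrev SChains (n : ℕ) (X : Type) [TopologicalSpace X] (A : Type) [AddCommGroup A] : Type :=
  SSimplex n X →₀ A

/-- The `i`-th face inclusion of topological simplices. -/
def face (n : ℕ) (i : Fin (n + 2)) : C(TSimplex n, TSimplex (n + 1)) :=
  ⟨fun t => SimplexCategory.toTopMap (SimplexCategory.δ i) t,
    SimplexCategory.continuous_toTopMap _⟩

/-- The singular boundary operator from degree `n+1` to degree `n`. -/
def bdryMap (n : ℕ) (X : Type) [TopologicalSpace X] (A : Type) [AddCommGroup A] :
    SChains (n + 1) X A →ₗ[ℤ] SChains n X A :=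
  Finsupp.lsum ℤ fun σ =>
    ∑ i : Fin (n + 2), ((-1 : ℤ) ^ (i : ℕ)) •
      (Finsupp.lsingle (σ.comp (face n i)) : A →ₗ[ℤ] SChains n X A)

/-- The boundary operator out of degree `n` (the zero map in degree `0`). -/
def bdryFrom (n : ℕ) (X : Type) [TopologicalSpace X] (A : Type) [AddCommGroup A] :
    SChains n X A →ₗ[ℤ] SChains (n - 1) X A :=
  match n with
  | 0 => 0
  | (m + 1) => bdryMap m X A

/-- Singular `n`-cycles. -/
def cyclesSub (n : ℕ) (X : Type) [TopologicalSpace X] (A : Type) [AddCommGroup A] :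
    Submodule ℤ (SChains n X A) :=
  LinearMap.ker (bdryFrom n X A)

/-- Singular `n`-boundaries. -/
def bdriesSub (n : ℕ) (X : Type) [TopologicalSpace X] (A : Type) [AddCommGroup A] :
    Submodule ℤ (SChains n X A) :=
  LinearMap.range (bdryMap n X A)

/-- The `ℓ¹`-norm of an integral singular chain. -/
def l1Z {n : ℕ} {X : Type} [TopologicalSpace X] (c : SChains n X ℤ) : ℝ :=
  c.sum fun _ a => |(a : ℝ)|

/-- The `ℓ¹`-norm of a real singular chain. -/
def l1R {n : ℕ} {X : Type} [TopologicalSpace X] (c : SChains n X ℝ) : ℝ :=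
  c.sum fun _ a => |a|

/-- Change of coefficients `ℤ → ℝ` on singular chains. -/
def castChain {n : ℕ} {X : Type} [TopologicalSpace X] (c : SChains n X ℤ) : SChains n X ℝ :=
  Finsupp.mapRange (fun a : ℤ => (a : ℝ)) Int.cast_zero c

/-- `z` is an integral fundamental cycle of `X` in degree `n`:  it is a cycle whose homology
class freely generates `H_n(X;ℤ)` (which for an oriented closed connected `n`-manifold
characterises the fundamental class up to sign). -/
def IsFundCycle (n : ℕ) (X : Type) [TopologicalSpace X] (z : SChains n X ℤ) : Prop :=
  z ∈ cyclesSub n X ℤ ∧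
  (∀ w ∈ cyclesSub n X ℤ, ∃ k : ℤ, w - k • z ∈ bdriesSub n X ℤ) ∧
  (∀ k : ℤ, k • z ∈ bdriesSub n X ℤ → k = 0)

/-- The `ℓ¹`-semi-norm (over `ℤ`) of the homology class of the cycle `z`. -/
def clNormZ (n : ℕ) (X : Type) [TopologicalSpace X] (z : SChains n X ℤ) : ℝ :=
  sInf {r : ℝ | ∃ c, c ∈ cyclesSub n X ℤ ∧ c - z ∈ bdriesSub n X ℤ ∧ r = l1Z c}

/-- The `ℓ¹`-semi-norm of the image in real homology of the class of the integral cycle `z`;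
for a fundamental cycle `z` of `M` this is the simplicial volume `‖M‖`. -/
def realSV (n : ℕ) (X : Type) [TopologicalSpace X] (z : SChains n X ℤ) : ℝ :=
  sInf {r : ℝ | ∃ c, c ∈ cyclesSub n X ℝ ∧ castChain z - c ∈ bdriesSub n X ℝ ∧ r = l1R c}

/-- The integral simplicial volume `‖X‖_ℤ`. -/
def intSV (n : ℕ) (X : Type) [TopologicalSpace X] : ℝ :=
  sInf {r : ℝ | ∃ z, IsFundCycle n X z ∧ r = clNormZ n X z}

/-- `N` is an oriented closed connected topological `n`-manifold (orientability is recorded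
through the existence of fundamental cycles in the statements below). -/
def IsClosedConnectedManifold (n : ℕ) (N : Type) [TopologicalSpace N] : Prop :=
  CompactSpace N ∧ ConnectedSpace N ∧ T2Space N ∧
    Nonempty (ChartedSpace (EuclideanSpace ℝ (Fin n)) N)

/-- The data contributing value `r` to the stable integral simplicial volume of `M`:
a `d`-sheeted covering `p : N → M` by an oriented closed connected `n`-manifold `N`
together with a fundamental cycle of `N`, with `r = ‖N‖_ℤ / d`. -/
def IsCoverDatum (n : ℕ) (M : Type) [TopologicalSpace M] (N : Type) [TopologicalSpace N]
    (p : N → M) (d : ℕ) (r : ℝ) : Prop :=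
  IsClosedConnectedManifold n N ∧ 0 < d ∧ IsCoveringMap p ∧
    (∀ x : M, Nat.card (p ⁻¹' {x}) = d) ∧
    ∃ z, IsFundCycle n N z ∧ r = clNormZ n N z / d

/-- The stable integral simplicial volume `‖M‖_ℤ^∞`. -/
def stisv (n : ℕ) (M : Type) [TopologicalSpace M] : ℝ :=
  sInf {r : ℝ | ∃ (N : Type) (tN : TopologicalSpace N) (p : N → M) (d : ℕ),
    @IsCoverDatum n M _ N tN p d r}

end

open MeasureTheory

noncomputable section

/-- A standard `Γ`-space structure on `X`: a probability measure on the standard Borel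
space `X` together with a measurable measure-preserving (left) `Γ`-action. -/
structure StdStr (Γ : Type) [Group Γ] (X : Type) [MeasurableSpace X] where
  μ : Measure X
  borel : StandardBorelSpace X
  prob : IsProbabilityMeasure μ
  act : Γ → X → X
  meas : ∀ g, MeasurePreserving (act g) μ μ
  act_one : ∀ x, act 1 x = x
  act_mul : ∀ g h x, act (g * h) x = act g (act h x)

variable {Γ : Type} [Group Γ] {X : Type} [MeasurableSpace X]

/-- The coefficient module `L^∞(X,μ;ℤ)` (for `b = true`) respectively `L^∞(X,μ;ℝ)`
(for `b = false`), realised as essentially bounded (and, if `b = true`, a.e.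
integer-valued) elements of the space of a.e.-equivalence classes of measurable
real-valued functions. -/
def LinfG (S : StdStr Γ X) (b : Bool) : AddSubgroup (X →ₘ[S.μ] ℝ) where
  carrier := {f | (∃ C : ℝ, ∀ᵐ x ∂S.μ, |f x| ≤ C) ∧
    (b → ∀ᵐ x ∂S.μ, ∃ k : ℤ, f x = (k : ℝ))}
  add_mem' := by
    rintro f g ⟨⟨C, hC⟩, hf⟩ ⟨⟨D, hD⟩, hg⟩
    constructor
    · refine ⟨C + D, ?_⟩
      filter_upwards [hC, hD, AEEqFun.coeFn_add f g] with x h1 h2 h3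
      rw [h3]
      exact (abs_add_le _ _).trans (add_le_add h1 h2)
    · intro hb
      filter_upwards [hf hb, hg hb, AEEqFun.coeFn_add f g] with x ⟨k, hk⟩ ⟨l, hl⟩ h3
      exact ⟨k + l, by rw [h3]; simp [Pi.add_apply, hk, hl]⟩
  zero_mem' := by
    constructor
    · refine ⟨0, ?_⟩
      filter_upwards [AEEqFun.coeFn_zero (μ := S.μ) (β := ℝ)] with x h
      simp [h]
    · intro _
      filter_upwards [AEEqFun.coeFn_zero (μ := S.μ) (β := ℝ)] with x h
      exact ⟨0, by simp [h]⟩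
  neg_mem' := by
    rintro f ⟨⟨C, hC⟩, hf⟩
    constructor
    · refine ⟨C, ?_⟩
      filter_upwards [hC, AEEqFun.coeFn_neg f] with x h1 h2
      rw [h2]; simpa using h1
    · intro hb
      filter_upwards [hf hb, AEEqFun.coeFn_neg f] with x ⟨k, hk⟩ h2
      exact ⟨-k, by rw [h2]; simp [hk]⟩

/-- The right `Γ`-action on `L^∞`: `(f · g)(x) = f(g • x)`. -/
def rhoG (S : StdStr Γ X) (b : Bool) (g : Γ) (f : (LinfG S b)) : (LinfG S b) :=
  ⟨AEEqFun.compMeasurePreserving (f : X →ₘ[S.μ] ℝ) (S.act g) (S.meas g), by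
    obtain ⟨⟨C, hC⟩, hf⟩ := f.2
    constructor
    · refine ⟨C, ?_⟩
      have := (S.meas g).quasiMeasurePreserving.ae hC
      filter_upwards [AEEqFun.coeFn_compMeasurePreserving
        (f : X →ₘ[S.μ] ℝ) (S.meas g), this] with x h1 h2
      rw [h1]; exact h2
    · intro hb
      have := (S.meas g).quasiMeasurePreserving.ae (hf hb)
      filter_upwards [AEEqFun.coeFn_compMeasurePreserving
        (f : X →ₘ[S.μ] ℝ) (S.meas g), this] with x h1 h2
      rw [h1]; exact h2⟩

/-- The constant function with (integer) value `k` in the coefficient module. -/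
def constLG (S : StdStr Γ X) (b : Bool) (k : ℤ) : (LinfG S b) :=
  ⟨k • (AEEqFun.const X (1 : ℝ) : X →ₘ[S.μ] ℝ), by
    constructor
    · refine ⟨|(k : ℝ)|, ?_⟩
      have h1 : ((k • (AEEqFun.const X (1 : ℝ) : X →ₘ[S.μ] ℝ)) : X →ₘ[S.μ] ℝ)
          =ᵐ[S.μ] fun _ => (k : ℝ) := by
        filter_upwards [AEEqFun.coeFn_smul (k : ℤ) (AEEqFun.const X (1 : ℝ) : X →ₘ[S.μ] ℝ),
          AEEqFun.coeFn_const X (1 : ℝ)] with x h2 h3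
        simp [h2, h3]
      filter_upwards [h1] with x h
      rw [h]
    · intro _
      have h1 : ((k • (AEEqFun.const X (1 : ℝ) : X →ₘ[S.μ] ℝ)) : X →ₘ[S.μ] ℝ)
          =ᵐ[S.μ] fun _ => (k : ℝ) := by
        filter_upwards [AEEqFun.coeFn_smul (k : ℤ) (AEEqFun.const X (1 : ℝ) : X →ₘ[S.μ] ℝ),
          AEEqFun.coeFn_const X (1 : ℝ)] with x h2 h3
        simp [h2, h3]
      filter_upwards [h1] with x h
      exact ⟨k, h⟩⟩

theorem constLG_zero (S : StdStr Γ X) (b : Bool) : constLG S b 0 = 0 :=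
  Subtype.ext (zero_smul ℤ _)

variable {Mt : Type} [TopologicalSpace Mt]

/-- Change of coefficients from `ℤ` to `L^∞` (constant functions) on chains of the
universal covering; this realises `C_*(M̃;ℤ) → L^∞ ⊗ C_*(M̃;ℤ)` at the chain level. -/
def iotaChain (S : StdStr Γ X) (b : Bool) {n : ℕ} (c : SChains n Mt ℤ) :
    SChains n Mt (LinfG S b) :=
  Finsupp.mapRange (constLG S b) (constLG_zero S b) c

/-- The submodule of relations defining the twisted coefficients
`L^∞(X;ℤ) ⊗_{ℤΓ} C_n(M̃;ℤ)`:  it is spanned by the elements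
`(g·σ) ⊗ f - σ ⊗ (f·g)`. -/
def relSub (n : ℕ) (actM : Γ → C(Mt, Mt)) (S : StdStr Γ X) (b : Bool) :
    Submodule ℤ (SChains n Mt (LinfG S b)) :=
  Submodule.span ℤ {c | ∃ (g : Γ) (σ : SSimplex n Mt) (f : (LinfG S b)),
    c = Finsupp.single ((actM g).comp σ) f - Finsupp.single σ (rhoG S b g f)}

/-- The parametrised `ℓ¹`-norm `Σ_σ ∫_X |f_σ| dμ` of a twisted chain. -/
def normP (S : StdStr Γ X) (b : Bool) {n : ℕ} (c : SChains n Mt (LinfG S b)) : ℝ :=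
  c.sum fun _ f => ∫ x, |(f : X →ₘ[S.μ] ℝ) x| ∂S.μ

/-- Pushforward of chains along the covering projection. -/
def pushf {M : Type} [TopologicalSpace M] (π : C(Mt, M)) {n : ℕ}
    (c : SChains n Mt ℤ) : SChains n M ℤ :=
  Finsupp.mapDomain (fun σ => π.comp σ) c

/-- `c` is an `X`-parametrised fundamental cycle for the fundamental cycle `z` of `M`:
working in the model `L^∞ ⊗_{ℤΓ} C_*(M̃;ℤ) = C_*(M̃;L^∞)/rel`, the chain `c` is a cycle
of the quotient complex and represents the image of the class of `z` under the change of
coefficients given by the constant inclusion `ℤ ↪ L^∞`. -/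
def IsPFC (n : ℕ) (Γ : Type) [Group Γ] (Mt M : Type) [TopologicalSpace Mt]
    [TopologicalSpace M] (π : C(Mt, M)) (actM : Γ → C(Mt, Mt))
    (X : Type) [MeasurableSpace X] (S : StdStr Γ X) (b : Bool)
    (z : SChains n M ℤ) (c : SChains n Mt (LinfG S b)) : Prop :=
  bdryFrom n Mt (LinfG S b) c ∈ relSub (n - 1) actM S b ∧
  ∃ zt : SChains n Mt ℤ, pushf π zt = z ∧
    c - iotaChain S b zt ∈ relSub n actM S b ⊔ bdriesSub n Mt (LinfG S b)

/-- The `X`-parametrised simplicial volume `⎸M⎹^X` (with integral coefficients for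
`b = true`, with real coefficients for `b = false`). -/
def pSV (b : Bool) (n : ℕ) (Γ : Type) [Group Γ] (Mt M : Type) [TopologicalSpace Mt]
    [TopologicalSpace M] (π : C(Mt, M)) (actM : Γ → C(Mt, Mt))
    (X : Type) [MeasurableSpace X] (S : StdStr Γ X) (z : SChains n M ℤ) : ℝ :=
  sInf {r : ℝ | ∃ c, IsPFC n Γ Mt M π actM X S b z c ∧ r = normP S b c}

/-- The integral foliated simplicial volume `⎸M⎹`: the infimum of the `X`-parametrised
simplicial volumes over all standard `Γ`-spaces `X`. -/
def ifsv (n : ℕ) (Γ : Type) [Group Γ] (Mt M : Type) [TopologicalSpace Mt]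
    [TopologicalSpace M] (π : C(Mt, M)) (actM : Γ → C(Mt, Mt))
    (z : SChains n M ℤ) : ℝ :=
  sInf {r : ℝ | ∃ (X : Type) (mX : MeasurableSpace X) (S : @StdStr Γ _ X mX),
    r = @pSV true n Γ _ Mt M _ _ π actM X mX S z}

/-- `π : M̃ → M` is a universal covering with deck transformation action `actM` of `Γ`
(so that `Γ` is identified with the fundamental group of `M`). -/
structure UnivCover (Γ : Type) [Group Γ] (Mt M : Type) [TopologicalSpace Mt]
    [TopologicalSpace M] (π : C(Mt, M)) (actM : Γ → C(Mt, Mt)) : Prop where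
  covering : IsCoveringMap π
  simplyConnected : SimplyConnectedSpace Mt
  deck_proj : ∀ g x, π (actM g x) = π x
  deck_trans : ∀ x y, π x = π y → ∃ g, actM g x = y
  deck_free : ∀ g x, actM g x = x → g = 1
  act_one : ∀ x, actM 1 x = x
  act_mul : ∀ g h x, actM (g * h) x = actM g (actM h x)

end

/-!
Integrating the coefficients and pushing simplices down along `π` is a chain map
`L^∞(X;ℝ) ⊗_{ℤΓ} C_*(M̃;ℤ) → C_*(M;ℝ)`: it kills the relations because `Γ` acts on `X`
preserving `μ` and deck transformations commute with `π`, and it does not increase norms since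
`|∫ f| ≤ ∫ |f|`. Conversely, lifting every simplex of `M` to `M̃` and taking constant
coefficients is a chain map up to relations, because two lifts of a simplex differ by a deck
transformation and constant functions are `Γ`-invariant; as `μ` is a probability measure, it
does not increase norms either. Both maps send representatives of the fundamental class to
representatives, so the two infima agree.
-/

section SingularSimplexLifts

def stdSimplexHomeomorphTSimplex (n : ℕ) : stdSimplex ℝ (Fin (n + 1)) ≃ₜ TSimplex n where
  toFun x := ⟨fun i => Real.toNNReal (x.1 i), by
    show ∑ i, Real.toNNReal (x.1 i) = 1
    rw [← NNReal.coe_inj, NNReal.coe_sum, NNReal.coe_one, ← x.2.2]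
    exact Finset.sum_congr rfl fun i _ => Real.coe_toNNReal _ (x.2.1 i)⟩
  invFun f := ⟨fun i => (f.1 i : ℝ), fun i => (f.1 i).2, by
    have hf : ∑ i, f.1 i = 1 := f.2
    rw [← NNReal.coe_inj, NNReal.coe_sum] at hf
    simpa using hf⟩
  left_inv x := Subtype.ext <| funext fun i => Real.coe_toNNReal _ (x.2.1 i)
  right_inv f := Subtype.ext <| funext fun i => Real.toNNReal_coe
  continuous_toFun := Continuous.subtype_mk (continuous_pi fun i =>
    continuous_real_toNNReal.comp ((continuous_apply i).comp continuous_subtype_val)) _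
  continuous_invFun := Continuous.subtype_mk (continuous_pi fun i =>
    NNReal.continuous_coe.comp ((continuous_apply (A := fun _ => NNReal) i).comp
      continuous_subtype_val)) _

instance (n : ℕ) : ContractibleSpace (TSimplex n) :=
  have : ContractibleSpace (stdSimplex ℝ (Fin (n + 1))) :=
    (convex_stdSimplex ℝ _).contractibleSpace ⟨_, single_mem_stdSimplex ℝ 0⟩
  (stdSimplexHomeomorphTSimplex n).symm.contractibleSpace

instance (n : ℕ) : LocallyPathConnectedSpace (TSimplex n) :=
  have := (convex_stdSimplex ℝ (Fin (n + 1))).locallyPathConnectedSpace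
  (stdSimplexHomeomorphTSimplex n).symm.isOpenEmbedding.locallyPathConnectedSpace

variable {E B : Type} [TopologicalSpace E] [TopologicalSpace B] {p : E → B}

theorem IsCoveringMap.surjective [PreconnectedSpace B] [Nonempty E] (hp : IsCoveringMap p) :
    Function.Surjective p := by
  have hclosed : IsClosed (Set.range p) := by
    refine isOpen_compl_iff.1 (isOpen_iff_forall_mem_open.2 fun x hx => ?_)
    obtain ⟨_, U, hxU, hU, _, H, _⟩ := hp x
    refine ⟨U, ?_, hU, hxU⟩
    rintro y hy ⟨e, rfl⟩
    exact hx ⟨_, (H ⟨e, hy⟩).2.2⟩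
  have hrange := IsClopen.eq_univ ⟨hclosed, hp.isOpenMap.isOpen_range⟩
    (Set.range_nonempty p)
  exact Set.range_eq_univ.1 hrange

theorem IsCoveringMap.exists_lift_of_surjective {A : Type} [TopologicalSpace A]
    [SimplyConnectedSpace A] [LocallyPathConnectedSpace A] {π : C(E, B)} (hπ : IsCoveringMap π)
    (hsurj : Function.Surjective π) (f : C(A, B)) : ∃ F : C(A, E), π.comp F = f := by
  obtain ⟨a₀⟩ := (inferInstance : Nonempty A)
  obtain ⟨e₀, he₀⟩ := hsurj (f a₀)
  obtain ⟨F, ⟨-, hF⟩, -⟩ := hπ.existsUnique_continuousMap_lifts f a₀ e₀ he₀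
  exact ⟨F, ContinuousMap.ext (congrFun hF)⟩

theorem UnivCover.exists_deck_comp_eq {Γ : Type} [Group Γ] {Mt M : Type} [TopologicalSpace Mt]
    [TopologicalSpace M] {π : C(Mt, M)} {actM : Γ → C(Mt, Mt)} (hU : UnivCover Γ Mt M π actM)
    {A : Type} [TopologicalSpace A] [PreconnectedSpace A] [Nonempty A] {τ τ' : C(A, Mt)}
    (h : π.comp τ = π.comp τ') : ∃ g, (actM g).comp τ = τ' := by
  obtain ⟨a₀⟩ := (inferInstance : Nonempty A)
  obtain ⟨g, hg⟩ := hU.deck_trans (τ a₀) (τ' a₀) (DFunLike.congr_fun h a₀)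
  refine ⟨g, ContinuousMap.ext (congrFun (hU.covering.eq_of_comp_eq ((actM g).comp τ).continuous
    τ'.continuous ?_ a₀ hg))⟩
  funext a
  simpa [hU.deck_proj] using DFunLike.congr_fun h a

end SingularSimplexLifts

namespace LinfG

variable {Γ : Type} [Group Γ] {X : Type} [MeasurableSpace X] (S : StdStr Γ X) {b : Bool}

theorem integrable (f : LinfG S b) : Integrable (f : X →ₘ[S.μ] ℝ) S.μ := by
  have := S.prob
  obtain ⟨C, hC⟩ := f.2.1
  exact ⟨(f : X →ₘ[S.μ] ℝ).aestronglyMeasurable, .of_bounded (C := C) (by simpa using hC)⟩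

noncomputable def integralHom (b : Bool) : LinfG S b →+ ℝ where
  toFun f := ∫ x, (f : X →ₘ[S.μ] ℝ) x ∂S.μ
  map_zero' := by
    rw [AddSubgroup.coe_zero, integral_congr_ae AEEqFun.coeFn_zero]
    simp
  map_add' f g := by
    rw [AddSubgroup.coe_add, integral_congr_ae (AEEqFun.coeFn_add _ _)]
    exact integral_add (integrable S f) (integrable S g)

theorem integralHom_apply (f : LinfG S b) :
    integralHom S b f = ∫ x, (f : X →ₘ[S.μ] ℝ) x ∂S.μ := rfl

theorem abs_integralHom_le (f : LinfG S b) :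
    |integralHom S b f| ≤ ∫ x, |(f : X →ₘ[S.μ] ℝ) x| ∂S.μ :=
  abs_integral_le_integral_abs

theorem integralHom_constLG (k : ℤ) : integralHom S b (constLG S b k) = k := by
  have := S.prob
  calc integralHom S b (constLG S b k) = ∫ _, (k : ℝ) ∂S.μ :=
        integral_congr_ae (by
          filter_upwards [AEEqFun.coeFn_smul k (AEEqFun.const X (1 : ℝ) : X →ₘ[S.μ] ℝ),
            AEEqFun.coeFn_const X (1 : ℝ)] with x h2 h3
          simp [constLG, h2, h3])
    _ = k := by simp

theorem integralHom_rhoG (g : Γ) (f : LinfG S b) :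
    integralHom S b (rhoG S b g f) = integralHom S b f := by
  have hf : AEStronglyMeasurable (f : X →ₘ[S.μ] ℝ) (S.μ.map (S.act g)) := by
    rw [(S.meas g).map_eq]
    exact (f : X →ₘ[S.μ] ℝ).aestronglyMeasurable
  calc ∫ x, ((f : X →ₘ[S.μ] ℝ).compMeasurePreserving (S.act g) (S.meas g)) x ∂S.μ
      = ∫ x, (f : X →ₘ[S.μ] ℝ) (S.act g x) ∂S.μ :=
        integral_congr_ae (AEEqFun.coeFn_compMeasurePreserving _ (S.meas g))
    _ = ∫ y, (f : X →ₘ[S.μ] ℝ) y ∂(S.μ.map (S.act g)) :=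
        (integral_map (S.meas g).measurable.aemeasurable hf).symm
    _ = ∫ y, (f : X →ₘ[S.μ] ℝ) y ∂S.μ := by rw [(S.meas g).map_eq]

theorem integral_abs_zero : ∫ x, |((0 : LinfG S b) : X →ₘ[S.μ] ℝ) x| ∂S.μ = 0 := by
  have h : (fun x => |((0 : LinfG S b) : X →ₘ[S.μ] ℝ) x|) =ᵐ[S.μ] 0 := by
    filter_upwards [AEEqFun.coeFn_zero (μ := S.μ) (β := ℝ)] with x hx
    simp [hx]
  rw [integral_congr_ae h, Pi.zero_def, integral_zero]

theorem integral_abs_add_le (f g : LinfG S b) :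
    ∫ x, |((f + g : LinfG S b) : X →ₘ[S.μ] ℝ) x| ∂S.μ ≤
      (∫ x, |(f : X →ₘ[S.μ] ℝ) x| ∂S.μ) + ∫ x, |(g : X →ₘ[S.μ] ℝ) x| ∂S.μ := by
  have h : (fun x => |((f + g : LinfG S b) : X →ₘ[S.μ] ℝ) x|)
      =ᵐ[S.μ] fun x => |(f : X →ₘ[S.μ] ℝ) x + (g : X →ₘ[S.μ] ℝ) x| := by
    filter_upwards [AEEqFun.coeFn_add (f : X →ₘ[S.μ] ℝ) g] with x hx
    rw [AddSubgroup.coe_add, hx, Pi.add_apply]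
  rw [integral_congr_ae h, ← integral_add (integrable S f).abs (integrable S g).abs]
  exact integral_mono ((integrable S f).add (integrable S g)).abs
    ((integrable S f).abs.add (integrable S g).abs) fun x => abs_add_le _ _

-- `a • 1` rather than `AEEqFun.const X a`, to match the encoding of `constLG`.
noncomputable def constHom : ℝ →+ LinfG S false where
  toFun a := ⟨a • (AEEqFun.const X (1 : ℝ) : X →ₘ[S.μ] ℝ), by
    refine ⟨⟨|a|, ?_⟩, fun h => absurd h Bool.false_ne_true⟩
    filter_upwards [AEEqFun.coeFn_smul a (AEEqFun.const X (1 : ℝ) : X →ₘ[S.μ] ℝ),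
      AEEqFun.coeFn_const X (1 : ℝ)] with x h2 h3
    simp [h2, h3]⟩
  map_zero' := Subtype.ext (zero_smul ℝ _)
  map_add' a b := Subtype.ext (add_smul a b _)

theorem coeFn_constHom (a : ℝ) :
    ((constHom S a : LinfG S false) : X →ₘ[S.μ] ℝ) =ᵐ[S.μ] fun _ => a := by
  filter_upwards [AEEqFun.coeFn_smul a (AEEqFun.const X (1 : ℝ) : X →ₘ[S.μ] ℝ),
    AEEqFun.coeFn_const X (1 : ℝ)] with x h2 h3
  simp [constHom, h2, h3]

theorem constLG_eq_constHom (k : ℤ) : constLG S false k = constHom S k :=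
  Subtype.ext (Int.cast_smul_eq_zsmul ℝ k _).symm

theorem integral_abs_constHom (a : ℝ) :
    ∫ x, |((constHom S a : LinfG S false) : X →ₘ[S.μ] ℝ) x| ∂S.μ = |a| := by
  have := S.prob
  calc ∫ x, |((constHom S a : LinfG S false) : X →ₘ[S.μ] ℝ) x| ∂S.μ = ∫ _, |a| ∂S.μ :=
        integral_congr_ae (by filter_upwards [coeFn_constHom S a] with x hx; rw [hx])
    _ = |a| := by simp

theorem rhoG_constHom (g : Γ) (a : ℝ) : rhoG S false g (constHom S a) = constHom S a := by
  refine Subtype.ext (AEEqFun.ext ?_)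
  filter_upwards [AEEqFun.coeFn_compMeasurePreserving
      ((constHom S a : LinfG S false) : X →ₘ[S.μ] ℝ) (S.meas g),
    (S.meas g).quasiMeasurePreserving.ae (coeFn_constHom S a), coeFn_constHom S a]
    with x h1 h2 h3
  exact h1.trans (h2.trans h3.symm)

end LinfG

namespace Finsupp

variable {α β A B : Type} [AddCommMonoid A] [AddCommMonoid B]

theorem sum_add_le_of_subadditive (w : A → ℝ) (hw0 : w 0 = 0)
    (hw : ∀ x y, w (x + y) ≤ w x + w y) (c d : α →₀ A) :
    (c + d).sum (fun _ => w) ≤ c.sum (fun _ => w) + d.sum (fun _ => w) := by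
  classical
  rw [sum_of_support_subset _ support_add _ fun _ _ => hw0,
    sum_of_support_subset c Finset.subset_union_left _ fun _ _ => hw0,
    sum_of_support_subset d Finset.subset_union_right _ fun _ _ => hw0,
    ← Finset.sum_add_distrib]
  exact Finset.sum_le_sum fun i _ => hw _ _

theorem sum_map_le_of_single_le (L : (α →₀ A) →+ (β →₀ B)) (v : A → ℝ) (w : B → ℝ)
    (hw0 : w 0 = 0) (hw : ∀ x y, w (x + y) ≤ w x + w y)
    (hL : ∀ a x, (L (single a x)).sum (fun _ => w) ≤ v x) (c : α →₀ A) :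
    (L c).sum (fun _ => w) ≤ c.sum (fun _ => v) := by
  calc (L c).sum (fun _ => w) = (∑ a ∈ c.support, L (single a (c a))).sum (fun _ => w) := by
        rw [← map_sum, ← Finsupp.sum, sum_single]
    _ ≤ ∑ a ∈ c.support, (L (single a (c a))).sum (fun _ => w) :=
        Finset.le_sum_of_subadditive (fun d : β →₀ B => d.sum fun _ => w) sum_zero_index.le
          (sum_add_le_of_subadditive w hw0 hw) _ _
    _ ≤ c.sum (fun _ => v) := Finset.sum_le_sum fun a _ => hL a (c a)

end Finsupp

section SingularChains

variable {Y Z : Type} [TopologicalSpace Y] [TopologicalSpace Z] {A B : Type} [AddCommGroup A]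
  [AddCommGroup B] {k : ℕ}

theorem bdryMap_single (σ : SSimplex (k + 1) Y) (a : A) :
    bdryMap k Y A (Finsupp.single σ a)
      = ∑ i : Fin (k + 2), ((-1 : ℤ) ^ (i : ℕ)) • Finsupp.single (σ.comp (face k i)) a := by
  simp [bdryMap]

theorem bdryMap_mapDomain_comp (F : C(Y, Z)) (c : SChains (k + 1) Y A) :
    bdryMap k Z A (Finsupp.mapDomain F.comp c) = Finsupp.mapDomain F.comp (bdryMap k Y A c) := by
  induction c using Finsupp.induction_linear with
  | zero => simp
  | add c d hc hd => rw [Finsupp.mapDomain_add, map_add, map_add, hc, hd, Finsupp.mapDomain_add]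
  | single σ a =>
    simp only [Finsupp.mapDomain_single, bdryMap_single, Finsupp.mapDomain_finsetSum,
      Finsupp.mapDomain_smul, ContinuousMap.comp_assoc]

theorem bdryMap_mapRange (h : A →+ B) (c : SChains (k + 1) Y A) :
    bdryMap k Y B (Finsupp.mapRange h h.map_zero c)
      = Finsupp.mapRange h h.map_zero (bdryMap k Y A c) := by
  induction c using Finsupp.induction_linear with
  | zero => simp
  | add c d hc hd =>
    rw [Finsupp.mapRange_add h.map_add, map_add, map_add, hc, hd, Finsupp.mapRange_add h.map_add]
  | single σ a =>
    simp only [Finsupp.mapRange_single, bdryMap_single, Finsupp.smul_single,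
      Finsupp.mapRange_finsetSum, map_zsmul]

end SingularChains

section IntegrateChain

variable {Γ : Type} [Group Γ] {X : Type} [MeasurableSpace X] (S : StdStr Γ X) (b : Bool)
  {Mt M : Type} [TopologicalSpace Mt] [TopologicalSpace M] (π : C(Mt, M))

noncomputable def integrateChain (k : ℕ) : SChains k Mt (LinfG S b) →ₗ[ℤ] SChains k M ℝ :=
  (Finsupp.lmapDomain ℝ ℤ π.comp).comp
    (Finsupp.mapRange.linearMap (LinfG.integralHom S b).toIntLinearMap)

variable {S b π} {k : ℕ}

theorem integrateChain_apply (c : SChains k Mt (LinfG S b)) :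
    integrateChain S b π k c = Finsupp.mapDomain π.comp
      (Finsupp.mapRange (LinfG.integralHom S b) (map_zero _) c) := rfl

theorem integrateChain_single (τ : SSimplex k Mt) (f : LinfG S b) :
    integrateChain S b π k (Finsupp.single τ f)
      = Finsupp.single (π.comp τ) (LinfG.integralHom S b f) := by
  rw [integrateChain_apply, Finsupp.mapRange_single, Finsupp.mapDomain_single]

theorem bdryMap_integrateChain (c : SChains (k + 1) Mt (LinfG S b)) :
    bdryMap k M ℝ (integrateChain S b π (k + 1) c)
      = integrateChain S b π k (bdryMap k Mt (LinfG S b) c) := by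
  rw [integrateChain_apply, integrateChain_apply, bdryMap_mapDomain_comp, bdryMap_mapRange]

theorem bdryFrom_integrateChain {n : ℕ} (c : SChains n Mt (LinfG S b)) :
    bdryFrom n M ℝ (integrateChain S b π n c)
      = integrateChain S b π (n - 1) (bdryFrom n Mt (LinfG S b) c) := by
  cases n with
  | zero => exact (map_zero _).symm
  | succ k => exact bdryMap_integrateChain c

theorem integrateChain_iotaChain (zt : SChains k Mt ℤ) :
    integrateChain S b π k (iotaChain S b zt) = castChain (pushf π zt) := by
  have h : (LinfG.integralHom S b ∘ constLG S b) = ((↑) : ℤ → ℝ) :=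
    funext (LinfG.integralHom_constLG S)
  simp only [integrateChain_apply, iotaChain, Finsupp.mapRange_mapRange, h, castChain, pushf]
  exact Finsupp.mapDomain_mapRange _ _ _ _ Int.cast_add

theorem relSub_le_ker_integrateChain (actM : Γ → C(Mt, Mt))
    (hdeck : ∀ g x, π (actM g x) = π x) (k : ℕ) :
    relSub k actM S b ≤ LinearMap.ker (integrateChain S b π k) := by
  refine Submodule.span_le.2 ?_
  rintro c ⟨g, σ, f, rfl⟩
  have h : π.comp ((actM g).comp σ) = π.comp σ := ContinuousMap.ext fun t => hdeck g (σ t)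
  rw [SetLike.mem_coe, LinearMap.mem_ker, map_sub, integrateChain_single, integrateChain_single,
    h, LinfG.integralHom_rhoG, sub_self]

theorem l1R_integrateChain_le (c : SChains k Mt (LinfG S b)) :
    l1R (integrateChain S b π k c) ≤ normP S b c :=
  Finsupp.sum_map_le_of_single_le (integrateChain S b π k).toAddMonoidHom _ _ abs_zero abs_add_le
    (fun τ f => by
      simp only [LinearMap.toAddMonoidHom_coe, integrateChain_single]
      rw [Finsupp.sum_single_index abs_zero]
      exact LinfG.abs_integralHom_le S f) c

end IntegrateChain

section LiftChain

variable {Γ : Type} [Group Γ] {X : Type} [MeasurableSpace X] (S : StdStr Γ X)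
  {Mt M : Type} [TopologicalSpace Mt] [TopologicalSpace M] {k : ℕ}

noncomputable def liftChain (lift : SSimplex k M → SSimplex k Mt) :
    SChains k M ℝ →ₗ[ℤ] SChains k Mt (LinfG S false) :=
  (Finsupp.lmapDomain (LinfG S false) ℤ lift).comp
    (Finsupp.mapRange.linearMap (LinfG.constHom S).toIntLinearMap)

variable {S}

theorem liftChain_apply (lift : SSimplex k M → SSimplex k Mt) (c : SChains k M ℝ) :
    liftChain S lift c
      = Finsupp.mapDomain lift (Finsupp.mapRange (LinfG.constHom S) (map_zero _) c) := rfl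

theorem liftChain_single (lift : SSimplex k M → SSimplex k Mt) (σ : SSimplex k M) (a : ℝ) :
    liftChain S lift (Finsupp.single σ a) = Finsupp.single (lift σ) (LinfG.constHom S a) := by
  rw [liftChain_apply, Finsupp.mapRange_single, Finsupp.mapDomain_single]

theorem liftChain_castChain (lift : SSimplex k M → SSimplex k Mt) (z : SChains k M ℤ) :
    liftChain S lift (castChain z) = iotaChain S false (Finsupp.mapDomain lift z) := by
  have h : LinfG.constHom S ∘ ((↑) : ℤ → ℝ) = constLG S false :=
    funext fun j => (LinfG.constLG_eq_constHom S j).symm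
  rw [liftChain_apply, castChain, Finsupp.mapRange_mapRange,
    Finsupp.mapDomain_mapRange _ _ _ _ fun x y => by simp]
  simp only [h, iotaChain]

theorem normP_liftChain_le (lift : SSimplex k M → SSimplex k Mt) (c : SChains k M ℝ) :
    normP S false (liftChain S lift c) ≤ l1R c :=
  Finsupp.sum_map_le_of_single_le (liftChain S lift).toAddMonoidHom _ _
    (LinfG.integral_abs_zero S) (LinfG.integral_abs_add_le S)
    (fun σ a => by
      simp only [LinearMap.toAddMonoidHom_coe, liftChain_single]
      rw [Finsupp.sum_single_index (LinfG.integral_abs_zero S)]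
      exact (LinfG.integral_abs_constHom S a).le) c

variable {π : C(Mt, M)} {actM : Γ → C(Mt, Mt)}

theorem pushf_mapDomain_of_comp_eq {lift : SSimplex k M → SSimplex k Mt}
    (hlift : ∀ σ, π.comp (lift σ) = σ) (z : SChains k M ℤ) :
    pushf π (Finsupp.mapDomain lift z) = z := by
  rw [pushf, ← Finsupp.mapDomain_comp, show π.comp ∘ lift = id from funext hlift,
    Finsupp.mapDomain_id]

theorem single_sub_single_mem_relSub (hU : UnivCover Γ Mt M π actM) {τ τ' : SSimplex k Mt}
    (h : π.comp τ = π.comp τ') (a : ℝ) :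
    Finsupp.single τ (LinfG.constHom S a) - Finsupp.single τ' (LinfG.constHom S a)
      ∈ relSub k actM S false := by
  obtain ⟨g, hg⟩ := hU.exists_deck_comp_eq h.symm
  have hrel : Finsupp.single ((actM g).comp τ') (LinfG.constHom S a)
      - Finsupp.single τ' (rhoG S false g (LinfG.constHom S a)) ∈ relSub k actM S false :=
    Submodule.subset_span ⟨g, τ', _, rfl⟩
  rwa [hg, LinfG.rhoG_constHom] at hrel

variable {lift : ∀ k, SSimplex k M → SSimplex k Mt}

theorem bdryMap_liftChain_sub_mem (hU : UnivCover Γ Mt M π actM)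
    (hlift : ∀ k σ, π.comp (lift k σ) = σ) (c : SChains (k + 1) M ℝ) :
    bdryMap k Mt (LinfG S false) (liftChain S (lift (k + 1)) c)
      - liftChain S (lift k) (bdryMap k M ℝ c) ∈ relSub k actM S false := by
  induction c using Finsupp.induction_linear with
  | zero => simp
  | add c d hc hd =>
    simpa only [map_add, add_sub_add_comm] using add_mem hc hd
  | single σ a =>
    rw [liftChain_single, bdryMap_single, bdryMap_single, map_sum, ← Finset.sum_sub_distrib]
    refine Submodule.sum_mem _ fun i _ => ?_
    rw [map_zsmul, liftChain_single, ← smul_sub]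
    refine Submodule.smul_mem _ _ (single_sub_single_mem_relSub hU ?_ a)
    rw [← ContinuousMap.comp_assoc, hlift, hlift]

theorem bdryFrom_liftChain_sub_mem (hU : UnivCover Γ Mt M π actM)
    (hlift : ∀ k σ, π.comp (lift k σ) = σ) {n : ℕ} (c : SChains n M ℝ) :
    bdryFrom n Mt (LinfG S false) (liftChain S (lift n) c)
      - liftChain S (lift (n - 1)) (bdryFrom n M ℝ c) ∈ relSub (n - 1) actM S false := by
  cases n with
  | zero => simp [bdryFrom]
  | succ k => exact bdryMap_liftChain_sub_mem hU hlift c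

end LiftChain

section Comparison

variable {Γ : Type} [Group Γ] {X : Type} [MeasurableSpace X] {S : StdStr Γ X}
  {Mt M : Type} [TopologicalSpace Mt] [TopologicalSpace M] {π : C(Mt, M)}
  {actM : Γ → C(Mt, Mt)} {n : ℕ} {z : SChains n M ℤ}

theorem IsPFC.integrateChain {b : Bool} {c : SChains n Mt (LinfG S b)}
    (hdeck : ∀ g x, π (actM g x) = π x) (hc : IsPFC n Γ Mt M π actM X S b z c) :
    integrateChain S b π n c ∈ cyclesSub n M ℝ ∧
      castChain z - integrateChain S b π n c ∈ bdriesSub n M ℝ := by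
  obtain ⟨hcyc, zt, rfl, hrel⟩ := hc
  have hker := relSub_le_ker_integrateChain (S := S) (b := b) (π := π) actM hdeck
  refine ⟨?_, ?_⟩
  · rw [cyclesSub, LinearMap.mem_ker, bdryFrom_integrateChain]
    exact hker _ hcyc
  · obtain ⟨r, hr, _, ⟨d, rfl⟩, hsum⟩ := Submodule.mem_sup.1 hrel
    have h := congrArg (integrateChain S b π n) hsum
    rw [map_sub, map_add, integrateChain_iotaChain, LinearMap.mem_ker.1 (hker n hr), zero_add,
      ← bdryMap_integrateChain] at h
    exact ⟨-integrateChain S b π (n + 1) d, by rw [map_neg, h, neg_sub]⟩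

theorem isPFC_liftChain {lift : ∀ k, SSimplex k M → SSimplex k Mt}
    (hU : UnivCover Γ Mt M π actM) (hlift : ∀ k σ, π.comp (lift k σ) = σ)
    {c : SChains n M ℝ} (hc : c ∈ cyclesSub n M ℝ) (hcz : castChain z - c ∈ bdriesSub n M ℝ) :
    IsPFC n Γ Mt M π actM X S false z (liftChain S (lift n) c) := by
  refine ⟨?_, Finsupp.mapDomain (lift n) z, pushf_mapDomain_of_comp_eq (hlift n) z, ?_⟩
  · simpa [LinearMap.mem_ker.1 hc] using bdryFrom_liftChain_sub_mem hU hlift c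
  · obtain ⟨d, hd⟩ := hcz
    have h : liftChain S (lift n) c - liftChain S (lift n) (castChain z)
        = (bdryMap n Mt (LinfG S false) (liftChain S (lift (n + 1)) d)
            - liftChain S (lift n) (bdryMap n M ℝ d))
          - bdryMap n Mt (LinfG S false) (liftChain S (lift (n + 1)) d) := by
      rw [hd, map_sub]
      abel
    rw [← liftChain_castChain, h]
    exact sub_mem (Submodule.mem_sup_left (bdryMap_liftChain_sub_mem hU hlift d))
      (Submodule.mem_sup_right ⟨_, rfl⟩)

end Comparison

theorem real_parametrised_simplicial_volume_eq_simplicial_volume_general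
    (n : ℕ) (Γ : Type) [Group Γ]
    (M : Type) [TopologicalSpace M] [ConnectedSpace M]
    (Mt : Type) [TopologicalSpace Mt] (π : C(Mt, M)) (actM : Γ → C(Mt, Mt))
    (hU : UnivCover Γ Mt M π actM)
    (z : SChains n M ℤ)
    (X : Type) [MeasurableSpace X] (S : StdStr Γ X) :
    pSV false n Γ Mt M π actM X S z = realSV n M z := by
  have : SimplyConnectedSpace Mt := hU.simplyConnected -- hence `Nonempty Mt`
  choose lift hlift using fun k (σ : SSimplex k M) =>
    hU.covering.exists_lift_of_surjective hU.covering.surjective σ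
  refine csInf_eq_csInf_of_forall_exists_le ?_ ?_
  · rintro _ ⟨c, hc, rfl⟩
    obtain ⟨hcyc, hbdry⟩ := hc.integrateChain hU.deck_proj
    exact ⟨_, ⟨_, hcyc, hbdry, rfl⟩, l1R_integrateChain_le c⟩
  · rintro _ ⟨c, hc, hcz, rfl⟩
    exact ⟨_, ⟨_, isPFC_liftChain hU hlift hc hcz, rfl⟩, normP_liftChain_le _ c⟩

/-- With real coefficients the parametrised simplicial volume recovers
the ordinary simplicial volume: for every oriented closed connected manifold `M` with
fundamental group `Γ` and every standard `Γ`-space `(X,μ)`, the infimum of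
`Σ ∫_X |f_j| dμ` over all cycles in `L^∞(X,μ;ℝ) ⊗_{ℤΓ} C_n(M̃;ℤ)` representing the image
of `[M]_ℤ` equals `‖M‖`. -/
theorem real_parametrised_simplicial_volume_eq_simplicial_volume
    (n : ℕ) (Γ : Type) [Group Γ] [Countable Γ]
    (M : Type) [TopologicalSpace M] [CompactSpace M] [ConnectedSpace M] [T2Space M]
    [ChartedSpace (EuclideanSpace ℝ (Fin n)) M]
    (Mt : Type) [TopologicalSpace Mt] (π : C(Mt, M)) (actM : Γ → C(Mt, Mt))
    (hU : UnivCover Γ Mt M π actM)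
    (z : SChains n M ℤ) (hz : IsFundCycle n M z)
    (X : Type) [MeasurableSpace X] (S : StdStr Γ X) :
    pSV false n Γ Mt M π actM X S z = realSV n M z :=
  real_parametrised_simplicial_volume_eq_simplicial_volume_general n Γ M Mt π actM hU z X S
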